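/- arXiv:2412.18033 — 2 statements merged into one kernel-verified Lean document; each statement's English description precedes it below -/
import Mathlib

section
/- Let n ≥ 1, let L_1, …, L_n ≥ 0 be real region capacities, let C : {1,…,n} → ℤ assign integer criticality values, and let P ∈ ℝ. Define w_1(z) = 1 for z ≥ 0, w_1(z) = z + 1 for −1 ≤ z < 0, and w_1(z) = 0 for z < −1, and φ(z) = ∑_{j=1}^n L_j · w_1(z − C(j)). Suppose z̃ ∈ ℝ satisfies φ(z̃) = P, and define l_j = L_j if C(j) ≤ ⌊z̃⌋; l_j = L_j(z̃ − ⌊z̃⌋) if ⌊z̃⌋ < C(j) ≤ ⌈z̃⌉; and l_j = 0 otherwise. Then: (1) 0 ≤ l_j ≤ L_j for all j; (2) ∑_{j=1}^n l_j = P; and (3) for every j with l_j < L_j and every j' with C(j') > C(j), we have l_{j'} = 0. -/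
/-- Ramp function `w_1`: `1` for `z ≥ 0`, `z + 1` for `-1 ≤ z < 0`, `0` for `z < -1`. -/
noncomputable def rampW1 (z : ℝ) : ℝ :=
  if 0 ≤ z then 1 else if -1 ≤ z then z + 1 else 0

lemma rampW1_eq (z : ℝ) (c : ℤ) :
    rampW1 (z - c) = if c ≤ ⌊z⌋ then 1 else if c ≤ ⌈z⌉ then z - ⌊z⌋ else 0 := by
  unfold rampW1
  by_cases h1 : c ≤ ⌊z⌋
  · have : (0:ℝ) ≤ z - c := by
      have : (c:ℝ) ≤ z := le_trans (by exact_mod_cast h1) (Int.floor_le z)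
      linarith
    simp [h1, this]
  · push_neg at h1
    by_cases h2 : c ≤ ⌈z⌉
    · -- c = ⌊z⌋ + 1, and z not integer (else ⌈z⌉ = ⌊z⌋ < c)
      have hc : c = ⌊z⌋ + 1 := le_antisymm (h2.trans (Int.ceil_le_floor_add_one z)) h1
      have hne : ⌊z⌋ < z := by
        rcases eq_or_lt_of_le (Int.floor_le z) with h | h
        · exfalso
          have : ⌈z⌉ = ⌊z⌋ := by
            rw [← h]; simp
          omega
        · exact h
      have hlt : z - c < 0 := by
        have := Int.lt_floor_add_one z
        rw [hc]; push_cast; linarith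
      have hge : (-1:ℝ) ≤ z - c := by
        rw [hc]; push_cast; linarith
      rw [if_neg h1.not_ge, if_pos h2, if_neg (not_le.mpr hlt), if_pos hge, hc]
      push_cast; ring
    · push_neg at h2
      have hle : z - c ≤ -1 := by
        have h3 : (⌈z⌉:ℝ) + 1 ≤ c := by exact_mod_cast h2
        have := Int.le_ceil z
        linarith
      rw [if_neg h1.not_ge, if_neg (not_le.mpr h2)]
      split_ifs with hA hB
      · linarith
      · linarith [le_antisymm hle hB]
      · rfl

/-- Continuous-action priority-based load shedding: the thresholding rule built
from a root `z̃` of the continuous CCF `φ` yields a feasible allocation that sheds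
exactly `P` and respects the priority order. -/
theorem continuous_load_shedding
    (n : ℕ) (hn : 1 ≤ n) (L : Fin n → ℝ) (hL : ∀ j, 0 ≤ L j)
    (C : Fin n → ℤ) (P : ℝ)
    (ztilde : ℝ) (hz : ∑ j, L j * rampW1 (ztilde - (C j : ℝ)) = P)
    (l : Fin n → ℝ)
    (hl : ∀ j, l j =
      if C j ≤ ⌊ztilde⌋ then L j
      else if C j ≤ ⌈ztilde⌉ then L j * (ztilde - ⌊ztilde⌋)
      else 0) :
    (∀ j, 0 ≤ l j ∧ l j ≤ L j) ∧
    (∑ j, l j = P) ∧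
    (∀ j j' : Fin n, l j < L j → C j < C j' → l j' = 0) := by
  have key : ∀ j, l j = L j * rampW1 (ztilde - (C j : ℝ)) := by
    intro j
    rw [hl j, rampW1_eq ztilde (C j)]
    split_ifs <;> ring
  have hfrac0 : (0:ℝ) ≤ ztilde - ⌊ztilde⌋ := by
    have := Int.floor_le ztilde; linarith
  have hfrac1 : ztilde - ⌊ztilde⌋ ≤ 1 := by
    have := Int.lt_floor_add_one ztilde; linarith
  refine ⟨?_, ?_, ?_⟩
  · intro j
    rw [hl j]
    split_ifs with h1 h2
    · exact ⟨hL j, le_refl _⟩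
    · constructor
      · exact mul_nonneg (hL j) hfrac0
      · calc L j * (ztilde - ⌊ztilde⌋) ≤ L j * 1 :=
              mul_le_mul_of_nonneg_left hfrac1 (hL j)
          _ = L j := mul_one _
    · exact ⟨le_refl _, hL j⟩
  · rw [← hz]; exact Finset.sum_congr rfl fun j _ => key j
  · intro j j' hlt hC
    rw [hl j] at hlt
    rw [hl j']
    have h1 : ¬ C j ≤ ⌊ztilde⌋ := by
      intro h; rw [if_pos h] at hlt; exact lt_irrefl _ hlt
    push_neg at h1
    have h2 : ¬ C j' ≤ ⌈ztilde⌉ := by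
      have := Int.ceil_le_floor_add_one ztilde
      omega
    rw [if_neg (by omega : ¬ C j' ≤ ⌊ztilde⌋), if_neg h2]
end

section
/- Suppose c > 0 satisfies the gap condition and z* is an optimal threshold for P. Then the CCF and its surrogate agree at z*: f(z*) = f̂(z*). -/
/-- Ramp function `w_c`: `1` for `z ≥ 0`, `z/c + 1` for `-c ≤ z < 0`, `0` for `z < -c`. -/
noncomputable def rampW (c z : ℝ) : ℝ :=
  if 0 ≤ z then 1 else if -c ≤ z then z / c + 1 else 0

/-- The cumulative criticality function `f(z) = ∑_{i : C i ≤ z} ℓ i`. -/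
noncomputable def ccf {I : Type*} [Fintype I] (ℓ C : I → ℝ) (z : ℝ) : ℝ :=
  ∑ i ∈ Finset.univ.filter (fun i => C i ≤ z), ℓ i

/-- The Lipschitz surrogate CCF `f̂(z) = ∑_i ℓ i · w_c (z - C i)`. -/
noncomputable def sccf {I : Type*} [Fintype I] (ℓ C : I → ℝ) (c z : ℝ) : ℝ :=
  ∑ i, ℓ i * rampW c (z - C i)

/-- The gap condition on `c`: criticality values that differ, differ by at least `c`. -/
def GapCond {I : Type*} (C : I → ℝ) (c : ℝ) : Prop :=
  ∀ i j : I, C j < C i → c ≤ C i - C j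

/-- `z` is an optimal threshold for `P`: `f(z) ≥ P` and `f(z') < P` for all `z' < z`. -/
def OptThresh {I : Type*} [Fintype I] (ℓ C : I → ℝ) (P z : ℝ) : Prop :=
  P ≤ ccf ℓ C z ∧ ∀ z' < z, ccf ℓ C z' < P

/-- Under the gap condition, the CCF and its surrogate agree at the optimal threshold. -/
theorem ccf_eq_sccf_at_opt_threshold
    {I : Type*} [Fintype I] [Nonempty I] (ℓ C : I → ℝ)
    (hℓ : ∀ i, 0 < ℓ i) (hC : ∀ i, C i ∈ Set.Icc (0 : ℝ) 1)
    (c : ℝ) (hc : 0 < c) (hgap : GapCond C c)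
    (P zstar : ℝ) (hopt : OptThresh ℓ C P zstar) :
    ccf ℓ C zstar = sccf ℓ C c zstar := by
  obtain ⟨h1, h2⟩ := hopt
  set s : Finset I := Finset.univ.filter (fun i => C i ≤ zstar) with hs
  -- s is nonempty
  have hsne : s.Nonempty := by
    by_contra h
    rw [Finset.not_nonempty_iff_eq_empty] at h
    have h0 : ccf ℓ C zstar = 0 := by
      simp [ccf, ← hs, h]
    have h3 := h2 (zstar - 1) (by linarith)
    have h4 : (0:ℝ) ≤ ccf ℓ C (zstar - 1) := by
      apply Finset.sum_nonneg
      intro i _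
      exact (hℓ i).le
    linarith [h1, h0, h3, h4]
  -- maximum element
  obtain ⟨i0, hi0s, hi0max⟩ := s.exists_max_image C hsne
  have hi0le : C i0 ≤ zstar := (Finset.mem_filter.mp hi0s).2
  -- zstar = C i0
  have hz : zstar = C i0 := by
    by_contra h
    have hlt : C i0 < zstar := lt_of_le_of_ne hi0le (fun e => h e.symm)
    have h3 := h2 (C i0) hlt
    have heq : ccf ℓ C (C i0) = ccf ℓ C zstar := by
      unfold ccf
      congr 1
      ext i
      simp only [Finset.mem_filter, Finset.mem_univ, true_and]
      constructor
      · intro hi; exact le_trans hi hi0le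
      · intro hi
        exact hi0max i (Finset.mem_filter.mpr ⟨Finset.mem_univ i, hi⟩)
    rw [heq] at h3
    linarith
  -- compute
  unfold sccf
  rw [← Finset.sum_filter_add_sum_filter_not Finset.univ (fun i => C i ≤ zstar)]
  have hA : ∀ i ∈ Finset.univ.filter (fun i => C i ≤ zstar),
      ℓ i * rampW c (zstar - C i) = ℓ i := by
    intro i hi
    have : C i ≤ zstar := (Finset.mem_filter.mp hi).2
    have : rampW c (zstar - C i) = 1 := by
      unfold rampW
      rw [if_pos (by linarith)]
    rw [this, mul_one]
  have hB : ∀ i ∈ Finset.univ.filter (fun i => ¬ C i ≤ zstar),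
      ℓ i * rampW c (zstar - C i) = 0 := by
    intro i hi
    have hgt : zstar < C i := lt_of_not_ge (Finset.mem_filter.mp hi).2
    have hgap' : c ≤ C i - C i0 := hgap i i0 (by rw [← hz]; exact hgt)
    have hle : zstar - C i ≤ -c := by rw [hz]; linarith
    unfold rampW
    rcases le_or_gt (-c) (zstar - C i) with hcase | hcase
    · have heq : zstar - C i = -c := le_antisymm hle hcase
      rw [if_neg (by linarith), if_pos hcase, heq]
      field_simp
      norm_num
    · rw [if_neg (by linarith), if_neg (not_le.mpr hcase), mul_zero]
  rw [Finset.sum_congr rfl hA, Finset.sum_congr rfl hB]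
  simp [ccf]
end
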